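/- arXiv:1112.2654 — 2 statements merged into one kernel-verified Lean document; each statement's English description precedes it below -/
import Mathlib

section
/- Let q > 1 be real, D = diag(q, −q⁻¹), and U = ((1/[2]_q, √[3]_q/[2]_q), (−√[3]_q/[2]_q, 1/[2]_q)). Then the matrix M = D·(U·D·Uᵀ) satisfies M³ = 1 and M ≠ 1; equivalently, M has trace −1 and determinant 1, so its complex eigenvalues are the primitive cube roots of unity e^{±2πi/3}. -/
open Matrix

/-- The quantum integer `[n]_q = (qⁿ − q⁻ⁿ)/(q − q⁻¹)`. -/
noncomputable def qn (q : ℝ) (n : ℤ) : ℝ := (q ^ n - q ^ (-n)) / (q - q⁻¹)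

/-- The diagonal R-matrix `D = diag(q, −q⁻¹)`. -/
noncomputable def Dmat (q : ℝ) : Matrix (Fin 2) (Fin 2) ℝ := !![q, 0; 0, -q⁻¹]

/-- The mixing (Racah) matrix `U`. -/
noncomputable def Umat (q : ℝ) : Matrix (Fin 2) (Fin 2) ℝ :=
  !![1 / qn q 2, Real.sqrt (qn q 3) / qn q 2;
     -Real.sqrt (qn q 3) / qn q 2, 1 / qn q 2]

/-!
`U` is a rotation by the angle with cosine `1/[2]_q`, because `[2]_q² = [3]_q + 1`. Hence
`det M = (det D)² = 1`, and a direct computation gives `tr M = (q² + q⁻² − 2[3]_q)/[2]_q² = −1`.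
By Cayley–Hamilton `M² + M + 1 = 0`, so `M³ = (M − 1)(M² + M + 1) + 1 = 1`, while `M ≠ 1`
since `tr 1 = 2`.
-/

namespace Matrix

variable {R : Type*} [CommRing R]

lemma sq_add_self_add_one_eq_zero [Nontrivial R] {A : Matrix (Fin 2) (Fin 2) R}
    (htr : A.trace = -1) (hdet : A.det = 1) : A ^ 2 + A + 1 = 0 := by
  simpa [charpoly_fin_two, htr, hdet, Algebra.algebraMap_eq_smul_one] using
    aeval_self_charpoly A

lemma pow_three_eq_one_of_trace_eq_neg_one_of_det_eq_one [Nontrivial R]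
    {A : Matrix (Fin 2) (Fin 2) R} (htr : A.trace = -1) (hdet : A.det = 1) : A ^ 3 = 1 :=
  calc A ^ 3 = (A - 1) * (A ^ 2 + A + 1) + 1 := by noncomm_ring
    _ = 1 := by rw [sq_add_self_add_one_eq_zero htr hdet, mul_zero, zero_add]

lemma trace_diag_mul_rotation_conj (a b c s : R) :
    trace (!![a, 0; 0, b] * (!![c, s; -s, c] * !![a, 0; 0, b] * (!![c, s; -s, c])ᵀ)) =
      c ^ 2 * (a ^ 2 + b ^ 2) + 2 * s ^ 2 * a * b := by
  simp [trace_fin_two, vecMul, dotProduct, Fin.sum_univ_two]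
  ring

end Matrix

section QuantumInteger

variable {q : ℝ} (hq : q - q⁻¹ ≠ 0)
include hq

lemma ne_zero_of_sub_inv_ne_zero : q ≠ 0 := by
  rintro rfl
  simp at hq

lemma qn_two : qn q 2 = q + q⁻¹ := by
  have hq0 : q ≠ 0 := ne_zero_of_sub_inv_ne_zero hq
  rw [qn, div_eq_iff hq]
  simp only [_root_.zpow_neg, zpow_ofNat]
  field_simp
  ring

lemma qn_three : qn q 3 = q ^ 2 + 1 + q⁻¹ ^ 2 := by
  have hq0 : q ≠ 0 := ne_zero_of_sub_inv_ne_zero hq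
  rw [qn, div_eq_iff hq]
  simp only [_root_.zpow_neg, zpow_ofNat]
  field_simp
  ring

lemma qn_two_sq : qn q 2 ^ 2 = qn q 3 + 1 := by
  rw [qn_two hq, qn_three hq]
  linear_combination 2 * mul_inv_cancel₀ (ne_zero_of_sub_inv_ne_zero hq)

lemma qn_two_ne_zero : qn q 2 ≠ 0 := by
  have : qn q 3 + 1 > 0 := by rw [qn_three hq]; positivity
  rw [← qn_two_sq hq] at this
  exact fun h => by simp [h] at this

lemma qn_three_nonneg : 0 ≤ qn q 3 := by
  rw [qn_three hq]
  positivity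

end QuantumInteger

noncomputable def torusPeriod (q : ℝ) : Matrix (Fin 2) (Fin 2) ℝ :=
  Dmat q * (Umat q * Dmat q * (Umat q)ᵀ)

lemma Umat_eq_rotation (q : ℝ) :
    Umat q = !![1 / qn q 2, √(qn q 3) / qn q 2; -(√(qn q 3) / qn q 2), 1 / qn q 2] := by
  rw [Umat, neg_div]

lemma det_Dmat {q : ℝ} (hq : q ≠ 0) : (Dmat q).det = -1 := by
  simp [Dmat, det_fin_two_of, hq]

section TorusPeriod

variable {q : ℝ} (hq : q - q⁻¹ ≠ 0)
include hq

lemma det_Umat : (Umat q).det = 1 := by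
  rw [Umat_eq_rotation, det_fin_two_of]
  field_simp [qn_two_ne_zero hq]
  rw [Real.sq_sqrt (qn_three_nonneg hq), qn_two_sq hq]
  ring

lemma det_torusPeriod : (torusPeriod q).det = 1 := by
  simp only [torusPeriod, det_mul, det_transpose, det_Dmat (ne_zero_of_sub_inv_ne_zero hq), det_Umat hq]
  norm_num

lemma trace_torusPeriod : (torusPeriod q).trace = -1 := by
  rw [torusPeriod, Umat_eq_rotation, Dmat, trace_diag_mul_rotation_conj, div_pow, div_pow,
    Real.sq_sqrt (qn_three_nonneg hq)]
  field_simp [qn_two_ne_zero hq]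
  rw [qn_two_sq hq, qn_three hq]
  field_simp [ne_zero_of_sub_inv_ne_zero hq]
  ring

end TorusPeriod

/-- for `M = D·(U·D·Uᵀ)` one has `M³ = 1`, `M ≠ 1`, `trace M = −1`
and `det M = 1` (hence its complex eigenvalues are the primitive cube roots of unity). -/
theorem torus_word_cube_root (q : ℝ) (hq : 1 < q) :
    (Dmat q * (Umat q * Dmat q * (Umat q)ᵀ)) ^ 3 = 1 ∧
    Dmat q * (Umat q * Dmat q * (Umat q)ᵀ) ≠ 1 ∧
    (Dmat q * (Umat q * Dmat q * (Umat q)ᵀ)).trace = -1 ∧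
    (Dmat q * (Umat q * Dmat q * (Umat q)ᵀ)).det = 1 := by
  have hq' : q - q⁻¹ ≠ 0 := sub_ne_zero.mpr (inv_lt_one_of_one_lt₀ hq |>.trans hq).ne'
  have htr := trace_torusPeriod hq'
  have hdet := det_torusPeriod hq'
  refine ⟨pow_three_eq_one_of_trace_eq_neg_one_of_det_eq_one htr hdet, fun h => ?_, htr, hdet⟩
  rw [torusPeriod, h, trace_one] at htr
  norm_num at htr
end

section
/- Let A and q be nonzero complex numbers with q² ≠ 1, q⁴ ≠ 1, q⁶ ≠ 1, write {x} = x − x⁻¹, and let S₁* = {A}/{q}, S₃* = {A}{Aq}{Aq²}/({q}{q²}{q³}), S₂₁* = {A}{Aq}{Aq⁻¹}/({q}{q}{q³}), S₁₁₁* = {A}{Aq⁻¹}{Aq⁻²}/({q}{q²}{q³}). Then S₃* − (q² − 1 + q⁻²)(q⁴ − q² + 1 − q⁻² + q⁻⁴)·S₂₁* + S₁₁₁* = S₁*·( (−q² + 1 − q⁻²)·A² + (q⁴ − q² + 3 − q⁻² + q⁻⁴) + (−q² + 1 − q⁻²)·A⁻² ), which is the HOMFLY polynomial of the knot 6₃ realized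 as the 3-strand braid (2,−1,1,−2). -/
/-- `{x} := x − x⁻¹`. -/
noncomputable def br (x : ℂ) : ℂ := x - x⁻¹

/-- `S₁* = {A}/{q}`. -/
noncomputable def S1 (A q : ℂ) : ℂ := br A / br q

/-- `S₂* = {A}{Aq}/({q}{q²})`. -/
noncomputable def S2 (A q : ℂ) : ℂ := br A * br (A * q) / (br q * br (q ^ 2))

/-- `S₁₁* = {A}{Aq⁻¹}/({q}{q²})`. -/
noncomputable def S11 (A q : ℂ) : ℂ := br A * br (A / q) / (br q * br (q ^ 2))

/-- `S₃* = {A}{Aq}{Aq²}/({q}{q²}{q³})`. -/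
noncomputable def S3 (A q : ℂ) : ℂ :=
  br A * br (A * q) * br (A * q ^ 2) / (br q * br (q ^ 2) * br (q ^ 3))

/-- `S₂₁* = {A}{Aq}{Aq⁻¹}/({q}{q}{q³})`. -/
noncomputable def S21 (A q : ℂ) : ℂ :=
  br A * br (A * q) * br (A / q) / (br q * br q * br (q ^ 3))

/-- `S₁₁₁* = {A}{Aq⁻¹}{Aq⁻²}/({q}{q²}{q³})`. -/
noncomputable def S111 (A q : ℂ) : ℂ :=
  br A * br (A / q) * br (A / q ^ 2) / (br q * br (q ^ 2) * br (q ^ 3))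

/-! Since `{x} = (x² - 1) / x`, each `S*` is a rational function of `A` and `q` whose
denominator is a product of powers of `A`, `q`, `q² - 1`, `q⁴ - 1` and `q⁶ - 1`. Clearing these
denominators turns the claim into a polynomial identity. -/

theorem br_eq_div (x : ℂ) : br x = (x ^ 2 - 1) / x := by
  rcases eq_or_ne x 0 with rfl | hx
  · simp [br]
  · rw [br]
    field_simp

theorem knot_6_3_three_strand_general (A q : ℂ) (hA : A ≠ 0) (hq : q ≠ 0)
    (h4 : q ^ 4 ≠ 1) (h6 : q ^ 6 ≠ 1) :
    S3 A q -
        (q ^ (2 : ℤ) - 1 + q ^ (-2 : ℤ)) *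
          (q ^ (4 : ℤ) - q ^ (2 : ℤ) + 1 - q ^ (-2 : ℤ) + q ^ (-4 : ℤ)) * S21 A q +
        S111 A q =
      S1 A q *
        ((-q ^ (2 : ℤ) + 1 - q ^ (-2 : ℤ)) * A ^ (2 : ℤ) +
          (q ^ (4 : ℤ) - q ^ (2 : ℤ) + 3 - q ^ (-2 : ℤ) + q ^ (-4 : ℤ)) +
          (-q ^ (2 : ℤ) + 1 - q ^ (-2 : ℤ)) * A ^ (-2 : ℤ)) := by
  have hq2 : q ^ 2 - 1 ≠ 0 := fun h ↦ h4 (by linear_combination (q ^ 2 + 1) * h)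
  have hq4 : (q ^ 2) ^ 2 - 1 ≠ 0 := by
    rw [← pow_mul]
    exact sub_ne_zero.mpr h4
  have hq6 : (q ^ 3) ^ 2 - 1 ≠ 0 := by
    rw [← pow_mul]
    exact sub_ne_zero.mpr h6
  simp only [S1, S3, S21, S111, br_eq_div, zpow_neg, zpow_ofNat]
  field_simp
  ring

/-- the HOMFLY polynomial of the knot `6₃` as the 3-strand braid
`(2,−1,1,−2)`: `S₃* − (q² − 1 + q⁻²)(q⁴ − q² + 1 − q⁻² + q⁻⁴)·S₂₁* + S₁₁₁*
= S₁*·((−q² + 1 − q⁻²)·A² + (q⁴ − q² + 3 − q⁻² + q⁻⁴) + (−q² + 1 − q⁻²)·A⁻²)`. -/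
theorem knot_6_3_three_strand (A q : ℂ) (hA : A ≠ 0) (hq : q ≠ 0)
    (h2 : q ^ 2 ≠ 1) (h4 : q ^ 4 ≠ 1) (h6 : q ^ 6 ≠ 1) :
    S3 A q -
        (q ^ (2 : ℤ) - 1 + q ^ (-2 : ℤ)) *
          (q ^ (4 : ℤ) - q ^ (2 : ℤ) + 1 - q ^ (-2 : ℤ) + q ^ (-4 : ℤ)) * S21 A q +
        S111 A q =
      S1 A q *
        ((-q ^ (2 : ℤ) + 1 - q ^ (-2 : ℤ)) * A ^ (2 : ℤ) +
          (q ^ (4 : ℤ) - q ^ (2 : ℤ) + 3 - q ^ (-2 : ℤ) + q ^ (-4 : ℤ)) +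
          (-q ^ (2 : ℤ) + 1 - q ^ (-2 : ℤ)) * A ^ (-2 : ℤ)) :=
  knot_6_3_three_strand_general A q hA hq h4 h6
end
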